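/- arXiv:2009.08540 — 10 statements merged into one kernel-verified Lean document; each statement's English description precedes it below -/
import Mathlib

section
/- Let λ : H → k be a partial action of a Hopf algebra H on its base field. Then the set N = {g ∈ G(H) | λ(g) = 1} is a subgroup of the group G(H) of group-like elements. -/
open TensorProduct Coalgebra HopfAlgebra

variable (k : Type*) [Field k]

/-- The convolution-type expression `h ↦ l(h₁) m(h₂)` (Sweedler notation). -/
noncomputable def pconv {H : Type*} [Ring H] [Bialgebra k H] (l m : H →ₗ[k] k) : H →ₗ[k] k :=
  (TensorProduct.lid k k).toLinearMap ∘ₗ TensorProduct.map l m ∘ₗ comul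

/-- A partial action of the Hopf (bi)algebra `H` on its base field `k`:
`l 1 = 1` and `l h * l v = l h₁ * l (h₂ * v)` for all `h v`. -/
def IsPartialAction {H : Type*} [Ring H] [Bialgebra k H] (l : H →ₗ[k] k) : Prop :=
  l 1 = 1 ∧ ∀ h v : H, l h * l v = pconv k l (l ∘ₗ LinearMap.mulRight k v) h

/-- The map `h ↦ l(h₁) h₂` (Sweedler notation). -/
noncomputable def lamL {H : Type*} [Ring H] [Bialgebra k H] (l : H →ₗ[k] k) : H →ₗ[k] H :=
  (TensorProduct.lid k H).toLinearMap ∘ₗ TensorProduct.map l LinearMap.id ∘ₗ comul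

/-- The map `h ↦ h₁ l(h₂)` (Sweedler notation); note `lamL l (lamR l h) = l(h₁) h₂ l(h₃)`. -/
noncomputable def lamR {H : Type*} [Ring H] [Bialgebra k H] (l : H →ₗ[k] k) : H →ₗ[k] H :=
  (TensorProduct.rid k H).toLinearMap ∘ₗ TensorProduct.map LinearMap.id l ∘ₗ comul

/-- A group-like element: nonzero with `Δ g = g ⊗ g`. -/
def IsGroupLikeElemLocal {H : Type*} [Ring H] [Bialgebra k H] (g : H) : Prop :=
  g ≠ 0 ∧ comul (R := k) g = g ⊗ₜ[k] g

lemma isGroupLikeElemLocal_iff {H : Type*} [Ring H] [Bialgebra k H] {g : H} :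
    IsGroupLikeElemLocal k g ↔ IsGroupLikeElem k g := by
  refine ⟨fun ⟨hg0, hΔ⟩ => ⟨?_, hΔ⟩, fun hg => ⟨hg.ne_zero, hg.comul_eq_tmul_self⟩⟩
  -- Applying `ε ⊗ id` to `Δ g = g ⊗ g` gives `ε(g) • g = g`, and `g ≠ 0`.
  have hcounit : counit (R := k) g • g = (1 : k) • g := by
    simpa [hΔ] using congrArg (TensorProduct.lid k H) (rTensor_counit_comul (R := k) g)
  exact smul_left_injective k hg0 hcounit

lemma pconv_apply_of_comul_eq_tmul_self {H : Type*} [Ring H] [Bialgebra k H] {g : H}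
    (hg : comul (R := k) g = g ⊗ₜ[k] g) (l m : H →ₗ[k] k) : pconv k l m g = l g * m g := by
  simp [pconv, hg]

lemma IsPartialAction.apply_mul_of_comul_eq_tmul_self {H : Type*} [Ring H] [Bialgebra k H]
    {l : H →ₗ[k] k} (hpa : IsPartialAction k l) {g : H} (hg : comul (R := k) g = g ⊗ₜ[k] g)
    (hlg : l g = 1) (v : H) : l (g * v) = l v := by
  simpa [pconv_apply_of_comul_eq_tmul_self k hg, hlg] using (hpa.2 g v).symm

/-- `N = {g group-like | l g = 1}` is a subgroup of the group of group-like
elements: it contains `1`, is closed under multiplication and under inverses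
(the inverse of a group-like `g` being its antipode image). -/
theorem partialAction_groupLikes_subgroup {H : Type*} [Ring H] [HopfAlgebra k H]
    {l : H →ₗ[k] k} (hpa : IsPartialAction k l) :
    (IsGroupLikeElemLocal k (1 : H) ∧ l 1 = 1) ∧
    (∀ g h : H, IsGroupLikeElemLocal k g → IsGroupLikeElemLocal k h → l g = 1 → l h = 1 →
      IsGroupLikeElemLocal k (g * h) ∧ l (g * h) = 1) ∧
    (∀ g : H, IsGroupLikeElemLocal k g → l g = 1 →
      IsGroupLikeElemLocal k (antipode (R := k) g) ∧ l (antipode (R := k) g) = 1) := by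
  simp only [isGroupLikeElemLocal_iff]
  refine ⟨⟨.one, hpa.1⟩, fun g h hg hh hlg hlh => ⟨hg.mul hh, ?_⟩,
    fun g hg hlg => ⟨hg.antipode, ?_⟩⟩
  · rw [hpa.apply_mul_of_comul_eq_tmul_self k hg.comul_eq_tmul_self hlg, hlh]
  · rw [← hpa.apply_mul_of_comul_eq_tmul_self k hg.comul_eq_tmul_self hlg,
      hg.mul_antipode_cancel, hpa.1]
end

section
/- Let λ : H → k be a partial action of a Hopf algebra H on k, and let g ∈ G(H) be a group-like element of prime order p with λ(g) = 0. Then λ(gⁱ) = 0 for every integer i with gcd(i, p) = 1. -/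
/-! If `l x ≠ 0` for a group-like `x`, the partial action axiom at `x` cancels to
`l (x * v) = l v`, so `l (x ^ n) = l 1 = 1` for every `n`. When `i` is coprime to the order
of `g`, `g` is a power of `g ^ i`; hence `l (g ^ i) ≠ 0` would force `l g = 1`. -/

open TensorProduct Coalgebra HopfAlgebra

variable (k : Type*) [Field k]

/-- A group-like element: nonzero with `Δ g = g ⊗ g`. -/
def IsGroupLikeElem' {H : Type*} [Ring H] [Bialgebra k H] (g : H) : Prop :=
  g ≠ 0 ∧ comul (R := k) g = g ⊗ₜ[k] g

section

variable {k} {H : Type*} [Ring H] [Bialgebra k H]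

lemma comul_pow_of_comul_eq {g : H} (hg : comul (R := k) g = g ⊗ₜ[k] g) (n : ℕ) :
    comul (R := k) (g ^ n) = (g ^ n) ⊗ₜ[k] (g ^ n) := by
  have h := map_pow (Bialgebra.comulAlgHom k H) g n
  rwa [Bialgebra.comulAlgHom_apply, Bialgebra.comulAlgHom_apply, hg,
    Algebra.TensorProduct.tmul_pow] at h

lemma pconv_apply_of_comul_eq (l m : H →ₗ[k] k) {x : H} (hx : comul (R := k) x = x ⊗ₜ[k] x) :
    pconv k l m x = l x * m x := by
  simp [pconv, hx]

namespace IsPartialAction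

variable {l : H →ₗ[k] k} (hpa : IsPartialAction k l) {x : H}
  (hx : comul (R := k) x = x ⊗ₜ[k] x) (hlx : l x ≠ 0)
include hpa hx hlx

lemma apply_mul_of_comul_eq (v : H) : l (x * v) = l v := by
  have h := hpa.2 x v
  rw [pconv_apply_of_comul_eq _ _ hx] at h
  simpa using (mul_left_cancel₀ hlx h).symm

lemma apply_pow_of_comul_eq (n : ℕ) : l (x ^ n) = 1 := by
  induction n with
  | zero => simpa using hpa.1
  | succ n ih => rw [pow_succ', hpa.apply_mul_of_comul_eq hx hlx, ih]

end IsPartialAction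

end

theorem partialAction_groupLike_primeOrder {H : Type*} [Ring H] [HopfAlgebra k H]
    {l : H →ₗ[k] k} (hpa : IsPartialAction k l) {g : H} (hg : IsGroupLikeElem' k g)
    {p : ℕ} (hgp : g ^ p = 1) (h0 : l g = 0) :
    ∀ i : ℕ, Nat.Coprime i p → l (g ^ i) = 0 := by
  intro i hi
  by_contra hne
  obtain ⟨m, hm⟩ :=
    exists_pow_eq_self_of_coprime (hi.coprime_dvd_right (orderOf_dvd_of_pow_eq_one hgp))
  have h1 := hpa.apply_pow_of_comul_eq (comul_pow_of_comul_eq hg.2 i) hne m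
  rw [hm, h0] at h1
  exact zero_ne_one h1
end

section
/- Let λ : H → k be a partial action of a Hopf algebra H on k, let g, t ∈ G(H) and let x be a (g,t)-primitive element, i.e. Δ(x) = x ⊗ g + t ⊗ x. If λ(g) = λ(t), then λ(x) = 0. -/
open TensorProduct Coalgebra HopfAlgebra

variable (k : Type*) [Field k]

/-! Taking `v = 1` in the partial-action identity gives `λ(h) = λ(h₁) λ(h₂)`. For a group-like `g`
this makes `λ(g)` idempotent, hence `0` or `1`; for the skew-primitive `x` it gives
`λ(x) = λ(x) λ(g) + λ(t) λ(x) = 2 λ(g) λ(x)`, which forces `λ(x) = 0`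
in both cases. -/

section

variable {k} {H : Type*} [Ring H] [Bialgebra k H]

theorem pconv_apply_of_comul_eq_tmul {l m : H →ₗ[k] k} {h a b : H}
    (hh : comul (R := k) h = a ⊗ₜ[k] b) : pconv k l m h = l a * m b := by
  simp [pconv, hh]

theorem pconv_apply_of_comul_eq_add_tmul {l m : H →ₗ[k] k} {h a b c d : H}
    (hh : comul (R := k) h = a ⊗ₜ[k] b + c ⊗ₜ[k] d) :
    pconv k l m h = l a * m b + l c * m d := by
  simp [pconv, hh]

theorem IsPartialAction.apply_eq_pconv {l : H →ₗ[k] k} (hpa : IsPartialAction k l) (h : H) :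
    l h = pconv k l l h := by
  have hh1 := hpa.2 h 1
  rwa [hpa.1, mul_one, LinearMap.mulRight_one, LinearMap.comp_id] at hh1

theorem IsPartialAction.isIdempotentElem_apply_of_comul_eq {l : H →ₗ[k] k}
    (hpa : IsPartialAction k l) {g : H} (hg : comul (R := k) g = g ⊗ₜ[k] g) :
    IsIdempotentElem (l g) :=
  ((hpa.apply_eq_pconv g).trans (pconv_apply_of_comul_eq_tmul hg)).symm

theorem IsPartialAction.apply_skewPrimitive {l : H →ₗ[k] k} (hpa : IsPartialAction k l)
    {g t x : H} (hx : comul (R := k) x = x ⊗ₜ[k] g + t ⊗ₜ[k] x) :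
    l x = l x * l g + l t * l x :=
  (hpa.apply_eq_pconv x).trans (pconv_apply_of_comul_eq_add_tmul hx)

end

theorem partialAction_skewPrimitive_eq {H : Type*} [Ring H] [HopfAlgebra k H]
    {l : H →ₗ[k] k} (hpa : IsPartialAction k l) {g t x : H}
    (hg : IsGroupLikeElem' k g)
    (hx : comul (R := k) x = x ⊗ₜ[k] g + t ⊗ₜ[k] x)
    (heq : l g = l t) : l x = 0 := by
  have hlx := hpa.apply_skewPrimitive hx
  rw [← heq] at hlx
  rcases IsIdempotentElem.iff_eq_zero_or_one.mp (hpa.isIdempotentElem_apply_of_comul_eq hg.2)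
    with hg0 | hg1
  · simpa [hg0] using hlx
  · rw [hg1] at hlx
    linear_combination -hlx
end

section
/- Let λ : H → k be a partial action of a Hopf algebra H on k, g, t ∈ G(H), and x a (g,t)-primitive element. If λ(x) = 0 and λ(t) = 1, then λ(xu) = 0 for all u ∈ H. -/
open TensorProduct Coalgebra HopfAlgebra

variable (k : Type*) [Field k]

theorem pconv_mulRight_apply_of_comul_eq {H : Type*} [Ring H] [Bialgebra k H]
    (l : H →ₗ[k] k) {g t x : H} (hx : comul (R := k) x = x ⊗ₜ[k] g + t ⊗ₜ[k] x) (u : H) :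
    pconv k l (l ∘ₗ LinearMap.mulRight k u) x = l x * l (g * u) + l t * l (x * u) := by
  simp [pconv, hx, LinearMap.mulRight_apply]

theorem partialAction_skewPrimitive_mul {H : Type*} [Ring H] [HopfAlgebra k H]
    {l : H →ₗ[k] k} (hpa : IsPartialAction k l) {g t x : H}
    (hx : comul (R := k) x = x ⊗ₜ[k] g + t ⊗ₜ[k] x)
    (hx0 : l x = 0) (ht1 : l t = 1) : ∀ u : H, l (x * u) = 0 := by
  intro u
  have hxu := hpa.2 x u
  rw [pconv_mulRight_apply_of_comul_eq k l hx, hx0, ht1] at hxu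
  simpa using hxu.symm
end

section
/- Let λ : H → k be a partial action of a Hopf algebra H on k, and let g, t be commuting group-like elements with λ(g) = λ(t) = 0. For any (g,t)-primitive element x, λ(g⁻¹ t⁻¹ x) = 0. -/
open TensorProduct Coalgebra HopfAlgebra

variable (k : Type*) [Field k]

/-! With `y = g⁻¹t⁻¹x` one has `Δ y = y ⊗ t⁻¹ + g⁻¹ ⊗ y`, so the partial-action identity at
`(y, t)` reads `λ(y) λ(t) = λ(y) λ(t⁻¹t) + λ(g⁻¹) λ(yt) = λ(y) + λ(g⁻¹) λ(yt)`. Here `λ(t) = 0`,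
and `λ(g⁻¹) = 0` by the same identity at `(g⁻¹, g)`, since `g⁻¹` is group-like. -/

section

variable {k}

theorem IsGroupLikeElem'.isGroupLikeElem {H : Type*} [Ring H] [Bialgebra k H] {g : H}
    (hg : IsGroupLikeElem' k g) : IsGroupLikeElem k g := by
  refine ⟨?_, hg.2⟩
  have hcounit : counit (R := k) g • g = (1 : k) • g := by
    simpa [hg.2] using congrArg (TensorProduct.lid k H) (rTensor_counit_comul (R := k) g)
  exact smul_left_injective k hg.1 hcounit

theorem comul_mul_eq_of_comul_eq {R H : Type*} [CommSemiring R] [Semiring H] [Bialgebra R H]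
    {u x g t : H} (hu : comul (R := R) u = u ⊗ₜ[R] u)
    (hx : comul (R := R) x = x ⊗ₜ[R] g + t ⊗ₜ[R] x) :
    comul (R := R) (u * x) = (u * x) ⊗ₜ[R] (u * g) + (u * t) ⊗ₜ[R] (u * x) := by
  rw [Bialgebra.comul_mul, hu, hx, mul_add, Algebra.TensorProduct.tmul_mul_tmul,
    Algebra.TensorProduct.tmul_mul_tmul]

theorem IsPartialAction.mul_apply_of_comul_eq {H : Type*} [Ring H] [Bialgebra k H]
    {l : H →ₗ[k] k} (hpa : IsPartialAction k l) {y a b : H}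
    (hy : comul (R := k) y = y ⊗ₜ[k] a + b ⊗ₜ[k] y) (v : H) :
    l y * l v = l y * l (a * v) + l b * l (y * v) := by
  rw [hpa.2, pconv, LinearMap.comp_apply, LinearMap.comp_apply, hy]
  simp only [map_add, TensorProduct.map_tmul, LinearEquiv.coe_coe, TensorProduct.lid_tmul,
    LinearMap.comp_apply, LinearMap.mulRight_apply, smul_eq_mul]

theorem IsPartialAction.apply_eq_zero_of_comul_eq {H : Type*} [Ring H] [Bialgebra k H]
    {l : H →ₗ[k] k} (hpa : IsPartialAction k l) {y a b c : H}
    (hy : comul (R := k) y = y ⊗ₜ[k] a + b ⊗ₜ[k] y) (hac : a * c = 1) (hc : l c = 0)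
    (hb : l b = 0) : l y = 0 := by
  have h := hpa.mul_apply_of_comul_eq hy c
  rwa [hac, hpa.1, hc, hb, mul_zero, zero_mul, add_zero, mul_one, eq_comm] at h

theorem IsPartialAction.apply_antipode_eq_zero {H : Type*} [Ring H] [HopfAlgebra k H]
    {l : H →ₗ[k] k} (hpa : IsPartialAction k l) {g : H} (hg : IsGroupLikeElem k g)
    (hg0 : l g = 0) : l (antipode k g) = 0 :=
  hpa.apply_eq_zero_of_comul_eq (b := 0) (by simp [hg.antipode.comul_eq_tmul_self])
    hg.antipode_mul_cancel hg0 (map_zero l)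

end

/-- if `g, t` are commuting group-likes with `l g = l t = 0` and `x` is
`(g,t)`-primitive, then `l (g⁻¹ * t⁻¹ * x) = 0`, where `g⁻¹ = S g`, `t⁻¹ = S t`. -/
theorem partialAction_skewPrimitive_invInv {H : Type*} [Ring H] [HopfAlgebra k H]
    {l : H →ₗ[k] k} (hpa : IsPartialAction k l) {g t x : H}
    (hg : IsGroupLikeElem' k g) (ht : IsGroupLikeElem' k t) (hcomm : g * t = t * g)
    (hx : comul (R := k) x = x ⊗ₜ[k] g + t ⊗ₜ[k] x)
    (hg0 : l g = 0) (ht0 : l t = 0) :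
    l (antipode (R := k) g * antipode (R := k) t * x) = 0 := by
  have hg' := hg.isGroupLikeElem
  have ht' := ht.isGroupLikeElem
  have hinv_comm : antipode k g * antipode k t = antipode k t * antipode k g := by
    rw [← antipode_mul_antidistrib, ← hcomm, antipode_mul_antidistrib]
  have hy := comul_mul_eq_of_comul_eq (hg'.antipode.mul ht'.antipode).comul_eq_tmul_self hx
  rw [hinv_comm, mul_assoc _ _ g, hg'.antipode_mul_cancel, mul_one, ← hinv_comm,
    mul_assoc _ _ t, ht'.antipode_mul_cancel, mul_one] at hy
  exact hpa.apply_eq_zero_of_comul_eq hy ht'.antipode_mul_cancel ht0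
    (hpa.apply_antipode_eq_zero hg' hg0)
end

section
/- Let λ : H → k be a partial action of a Hopf algebra H on k and define H_λ = {λ(h₁)h₂ | h ∈ H} ⊆ H (the image of the map h ↦ λ(h₁)h₂). Then H_λ is a (unital) subalgebra of H, isomorphic as an algebra to the partial smash product algebra k#H underlined, and the restriction of λ to H_λ equals the restriction of the counit ε to H_λ. -/
/-!
`lamL k μ : h ↦ μ(h₁)h₂` is the left action of a functional `μ` on `H`, and by coassociativity
acting by `μ` and then by `ν` is acting by the convolution `pconv k μ ν : h ↦ μ(h₁)ν(h₂)`.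
The partial-action axiom says precisely that `l` convolved with `l(· v)` is `l(v) • l`; hence
`l(h₁)l(h₂v)h₃ = l(v)l(h₁)h₂`. Expanding `lamL k l (x g) = l(x₁g₁)x₂g₂` for `x = l(h₁)h₂`
with this identity gives `l(g₁) x g₂ = x · lamL k l g`, so the range of `lamL k l` is closed
under products. Taking `v = 1` gives `l * l = l`, so for `x = l(h₁)h₂` we get
`l(x) = l(h₁)l(h₂) = l(h) = ε(x)`.
-/

open TensorProduct Coalgebra HopfAlgebra

variable (k : Type*) [Field k]

section

variable {k} {H : Type*} [Ring H] [Bialgebra k H]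

theorem lamL_apply_eq_sum {h : H} {ι : Type*} (𝓡 : Coalgebra.Repr k h ι) (l : H →ₗ[k] k) :
    lamL k l h = ∑ i ∈ 𝓡.index, l (𝓡.left i) • 𝓡.right i := by
  simp [lamL, ← 𝓡.eq, map_sum]

theorem lamL_smul (c : k) (l : H →ₗ[k] k) : lamL k (c • l) = c • lamL k l := by
  simp only [lamL, TensorProduct.map_smul_left, LinearMap.smul_comp, LinearMap.comp_smul]

theorem comp_lamL (l m : H →ₗ[k] k) : m ∘ₗ lamL k l = pconv k l m := by
  have : m ∘ₗ (TensorProduct.lid k H).toLinearMap ∘ₗ map l LinearMap.id =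
      (TensorProduct.lid k k).toLinearMap ∘ₗ map l m := by
    ext; simp
  ext h; exact LinearMap.congr_fun this (comul h)

theorem lamL_lamL (l m : H →ₗ[k] k) (h : H) : lamL k l (lamL k m h) = lamL k (pconv k m l) h := by
  have hpull : lamL k l ∘ₗ (TensorProduct.lid k H).toLinearMap ∘ₗ map m LinearMap.id =
      (TensorProduct.lid k H).toLinearMap ∘ₗ map m (lamL k l) := by
    ext; simp
  have hassoc : (TensorProduct.lid k H).toLinearMap ∘ₗ
        map m ((TensorProduct.lid k H).toLinearMap ∘ₗ map l LinearMap.id) =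
      (TensorProduct.lid k H).toLinearMap ∘ₗ
        map ((TensorProduct.lid k k).toLinearMap ∘ₗ map m l) LinearMap.id ∘ₗ
        (TensorProduct.assoc k H H H).symm.toLinearMap := by
    ext; simp [smul_smul, mul_comm]
  calc lamL k l (lamL k m h)
      = TensorProduct.lid k H (map m (lamL k l) (comul h)) := LinearMap.congr_fun hpull (comul h)
    _ = TensorProduct.lid k H (map m ((TensorProduct.lid k H).toLinearMap ∘ₗ map l LinearMap.id)
          (comul.lTensor H (comul h))) := by
        rw [LinearMap.map_lTensor]; rfl
    _ = TensorProduct.lid k H (map ((TensorProduct.lid k k).toLinearMap ∘ₗ map m l) LinearMap.id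
          ((TensorProduct.assoc k H H H).symm (comul.lTensor H (comul h)))) :=
        LinearMap.congr_fun hassoc _
    _ = lamL k (pconv k m l) h := by
        rw [coassoc_symm_apply, LinearMap.map_rTensor]; rfl

theorem lamL_mul_eq_sum {y : H} {ι : Type*} (𝓡 : Coalgebra.Repr k y ι) (l : H →ₗ[k] k) (x : H) :
    lamL k l (x * y) =
      ∑ i ∈ 𝓡.index, lamL k (l ∘ₗ LinearMap.mulRight k (𝓡.left i)) x * 𝓡.right i := by
  simp only [lamL, LinearMap.comp_apply, Bialgebra.comul_mul, ← (ℛ k x).eq, ← 𝓡.eq,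
    Finset.sum_mul, Finset.mul_sum, Algebra.TensorProduct.tmul_mul_tmul, map_sum,
    LinearEquiv.coe_coe, map_tmul, LinearMap.id_coe, id_eq, lid_tmul, LinearMap.mulRight_apply,
    smul_mul_assoc]

theorem counit_lamL (l : H →ₗ[k] k) (h : H) : counit (R := k) (lamL k l h) = l h := by
  have : map l counit (comul h) = map l LinearMap.id (counit.lTensor H (comul (R := k) h)) := by
    rw [LinearMap.map_lTensor]; rfl
  rw [← LinearMap.comp_apply, comp_lamL, pconv, LinearMap.comp_apply, LinearMap.comp_apply, this]
  simp

theorem pconv_mulRight {l : H →ₗ[k] k} (hpa : IsPartialAction k l) (v : H) :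
    pconv k l (l ∘ₗ LinearMap.mulRight k v) = l v • l := by
  ext h
  rw [LinearMap.smul_apply, smul_eq_mul, ← hpa.2 h v, mul_comm]

theorem lamL_mulRight_lamL {l : H →ₗ[k] k} (hpa : IsPartialAction k l) (v h : H) :
    lamL k (l ∘ₗ LinearMap.mulRight k v) (lamL k l h) = l v • lamL k l h := by
  rw [lamL_lamL, pconv_mulRight hpa, lamL_smul, LinearMap.smul_apply]

theorem lamL_mul_lamL {l : H →ₗ[k] k} (hpa : IsPartialAction k l) (h g : H) :
    lamL k l h * lamL k l g = lamL k l (lamL k l h * g) := by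
  rw [lamL_mul_eq_sum (ℛ k g), lamL_apply_eq_sum (ℛ k g) l, Finset.mul_sum]
  simp only [lamL_mulRight_lamL hpa, mul_smul_comm, smul_mul_assoc]

theorem lamL_one {l : H →ₗ[k] k} (hpa : IsPartialAction k l) : lamL k l 1 = 1 := by
  simp [lamL, Algebra.TensorProduct.one_def, hpa.1]

theorem apply_lamL_self {l : H →ₗ[k] k} (hpa : IsPartialAction k l) (h : H) :
    l (lamL k l h) = l h := by
  have hconv := pconv_mulRight hpa 1
  rw [LinearMap.mulRight_one, LinearMap.comp_id, hpa.1, one_smul] at hconv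
  rw [← LinearMap.comp_apply, comp_lamL, hconv]

end

/-- `H_l = {l(h₁)h₂ | h ∈ H}` (the range of `lamL`) is a unital subalgebra of
`H`; the multiplication of `H` on it corresponds to that of the partial smash product
`k # H` (underlined) via `φ(1 # l(h₁)h₂) = l(h₁)h₂`, which is encoded by the identity
`(l(h₁)h₂)(l(g₁)g₂) = φ((1 # h)(1 # g)) = l(h₁)h₂·g ↦ λ-projected`; and `l` agrees with
the counit `ε` on `H_l`. -/
theorem range_lamL_subalgebra {H : Type*} [Ring H] [HopfAlgebra k H]
    {l : H →ₗ[k] k} (hpa : IsPartialAction k l) :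
    (∃ S : Subalgebra k H, (S : Set H) = Set.range (lamL k l)) ∧
    (∀ h g : H, lamL k l h * lamL k l g = lamL k l (lamL k l h * g)) ∧
    (∀ a ∈ Set.range (lamL k l), l a = counit (R := k) a) := by
  refine ⟨⟨(LinearMap.range (lamL k l)).toSubalgebra ⟨1, lamL_one hpa⟩ ?_, LinearMap.coe_range _⟩,
    lamL_mul_lamL hpa, ?_⟩
  · rintro _ _ ⟨h, rfl⟩ ⟨g, rfl⟩
    exact ⟨_, (lamL_mul_lamL hpa h g).symm⟩
  · rintro _ ⟨h, rfl⟩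
    rw [apply_lamL_self hpa, counit_lamL]
end

section
/- Let λ : H → k be a partial action of a Hopf algebra H on k. Then λ(λ(h₁)h₂) = λ(h) for all h ∈ H, and ε(λ(h₁)h₂) = λ(h) for all h ∈ H; hence λ and ε agree on the subspace H_λ = {λ(h₁)h₂ | h ∈ H}. -/
open TensorProduct Coalgebra HopfAlgebra

variable (k : Type*) [Field k]

/-- A group-like element: nonzero with `Δ g = g ⊗ g`. -/
def IsGroupLikeElement {H : Type*} [Ring H] [Bialgebra k H] (g : H) : Prop :=
  g ≠ 0 ∧ comul (R := k) g = g ⊗ₜ[k] g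

/-! Applying a functional `g` to `l(h₁)h₂` gives the convolution `l(h₁)g(h₂)`. For `g = l` the
partial-action axiom with `v = 1` reduces this to `l h`, and for `g = ε` the counit axiom does. -/

section PartialAction

variable {k} {H : Type*} [Ring H] [Bialgebra k H]

theorem apply_lamL (f g : H →ₗ[k] k) (h : H) : g (lamL k f h) = pconv k f g h := by
  suffices g ∘ₗ (TensorProduct.lid k H).toLinearMap ∘ₗ TensorProduct.map f LinearMap.id =
      (TensorProduct.lid k k).toLinearMap ∘ₗ TensorProduct.map f g from
    congr($this (comul h))
  ext a b
  simp

theorem pconv_counit (f : H →ₗ[k] k) : pconv k f (counit (A := H)) = f := by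
  ext h
  rw [pconv, ← LinearMap.id_comp counit, ← LinearMap.map_comp_lTensor]
  simp only [LinearMap.comp_apply, Coalgebra.lTensor_counit_comul]
  simp

theorem IsPartialAction.pconv_self {l : H →ₗ[k] k} (hpa : IsPartialAction k l) :
    pconv k l l = l := by
  ext h
  have hmul := hpa.2 h 1
  rw [hpa.1, mul_one, LinearMap.mulRight_one, LinearMap.comp_id] at hmul
  exact hmul.symm

end PartialAction

/-- `l (l(h₁)h₂) = l h` and `ε (l(h₁)h₂) = l h` for all `h`; hence `l` and
`ε` agree on `H_l = {l(h₁)h₂ | h ∈ H}`. -/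
theorem lam_counit_agree_on_range {H : Type*} [Ring H] [HopfAlgebra k H]
    {l : H →ₗ[k] k} (hpa : IsPartialAction k l) :
    (∀ h : H, l (lamL k l h) = l h) ∧
    (∀ h : H, counit (R := k) (lamL k l h) = l h) ∧
    (∀ a ∈ Set.range (lamL k l), l a = counit (R := k) a) := by
  have hl : ∀ h : H, l (lamL k l h) = l h := fun h => by
    rw [apply_lamL, hpa.pconv_self]
  have hε : ∀ h : H, counit (R := k) (lamL k l h) = l h := fun h => by
    rw [apply_lamL, pconv_counit]
  refine ⟨hl, hε, ?_⟩
  rintro _ ⟨h, rfl⟩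
  rw [hl, hε]
end

section
/- For a group-like element x = g of a Hopf algebra H and a partial action λ : H → k, one has λ(g₁)g₂ = λ(g₁)g₂λ(g₃); moreover, if x is a (g,h)-primitive element with λ(g) = λ(h), then λ(x₁)x₂ = λ(x₁)x₂λ(x₃). -/
open TensorProduct Coalgebra HopfAlgebra

variable (k : Type*) [Field k]

section PartialAction

variable {k} {H : Type*} [Ring H] [Bialgebra k H] {l : H →ₗ[k] k} {g h x : H}

theorem lamL_of_comul_eq_tmul_self (hg : comul (R := k) g = g ⊗ₜ[k] g) :
    lamL k l g = l g • g := by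
  simp [lamL, hg]

theorem lamR_of_comul_eq_tmul_self (hg : comul (R := k) g = g ⊗ₜ[k] g) :
    lamR k l g = l g • g := by
  simp [lamR, hg]

theorem lamL_of_comul_eq_skewPrimitive (hx : comul (R := k) x = x ⊗ₜ[k] g + h ⊗ₜ[k] x) :
    lamL k l x = l x • g + l h • x := by
  simp [lamL, hx]

theorem lamR_of_comul_eq_skewPrimitive (hx : comul (R := k) x = x ⊗ₜ[k] g + h ⊗ₜ[k] x) :
    lamR k l x = l g • x + l x • h := by
  simp [lamR, hx]

namespace IsPartialAction

theorem mul_apply_mul_of_comul_eq_tmul_self (hpa : IsPartialAction k l)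
    (hg : comul (R := k) g = g ⊗ₜ[k] g) (v : H) : l g * l (g * v) = l g * l v := by
  simpa [pconv, hg] using (hpa.2 g v).symm

theorem isIdempotentElem_of_comul_eq_tmul_self (hpa : IsPartialAction k l)
    (hg : comul (R := k) g = g ⊗ₜ[k] g) : IsIdempotentElem (l g) := by
  show l g * l g = l g
  simpa only [mul_one, hpa.1] using hpa.mul_apply_mul_of_comul_eq_tmul_self hg 1

/-- With `e = l g = l h` idempotent, the relation at `v = 1` reads `l x = 2 e l x`;
multiplying by `e` gives `e l x = 0`, hence `l x = 0`. -/
theorem apply_eq_zero_of_comul_eq_skewPrimitive (hpa : IsPartialAction k l)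
    (hg : comul (R := k) g = g ⊗ₜ[k] g) (hx : comul (R := k) x = x ⊗ₜ[k] g + h ⊗ₜ[k] x)
    (hgh : l g = l h) : l x = 0 := by
  have hrel : l x = l x * l g + l g * l x := by
    simpa [pconv, hx, hpa.1, hgh] using hpa.2 x 1
  have he : l g * l g = l g := hpa.isIdempotentElem_of_comul_eq_tmul_self hg
  have hex : l g * l x = 0 := by
    linear_combination (-l g) * hrel - 2 * l x * he
  linear_combination hrel + 2 * hex

theorem lamL_lamR_of_comul_eq_tmul_self (hpa : IsPartialAction k l)
    (hg : comul (R := k) g = g ⊗ₜ[k] g) : lamL k l (lamR k l g) = lamL k l g := by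
  rw [lamR_of_comul_eq_tmul_self hg, map_smul, lamL_of_comul_eq_tmul_self hg, smul_smul,
    hpa.isIdempotentElem_of_comul_eq_tmul_self hg]

theorem lamL_lamR_of_comul_eq_skewPrimitive (hpa : IsPartialAction k l)
    (hg : comul (R := k) g = g ⊗ₜ[k] g) (hh : comul (R := k) h = h ⊗ₜ[k] h)
    (hx : comul (R := k) x = x ⊗ₜ[k] g + h ⊗ₜ[k] x) (hgh : l g = l h) :
    lamL k l (lamR k l x) = lamL k l x := by
  have hx0 := hpa.apply_eq_zero_of_comul_eq_skewPrimitive hg hx hgh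
  rw [lamR_of_comul_eq_skewPrimitive hx, map_add, map_smul, map_smul,
    lamL_of_comul_eq_skewPrimitive hx, lamL_of_comul_eq_tmul_self hh, hx0, hgh]
  simp only [zero_smul, zero_mul, zero_add, add_zero, smul_smul,
    (hpa.isIdempotentElem_of_comul_eq_tmul_self hh).eq]

end IsPartialAction

end PartialAction

/-- for group-like `g`, `l(g₁)g₂ = l(g₁)g₂ l(g₃)`; and for a
`(g,h)`-primitive `x` with `l g = l h`, `l(x₁)x₂ = l(x₁)x₂ l(x₃)`
(the right-hand sides being `lamL ∘ lamR`). -/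
theorem lamL_eq_on_groupLike_and_primitive {H : Type*} [Ring H] [HopfAlgebra k H]
    {l : H →ₗ[k] k} (hpa : IsPartialAction k l) :
    (∀ g : H, IsGroupLikeElem' k g → lamL k l g = lamL k l (lamR k l g)) ∧
    (∀ g h x : H, IsGroupLikeElem' k g → IsGroupLikeElem' k h →
      comul (R := k) x = x ⊗ₜ[k] g + h ⊗ₜ[k] x → l g = l h →
      lamL k l x = lamL k l (lamR k l x)) :=
  ⟨fun _ hg => (hpa.lamL_lamR_of_comul_eq_tmul_self hg.2).symm,
    fun _ _ _ hg hh hx hgh => (hpa.lamL_lamR_of_comul_eq_skewPrimitive hg.2 hh.2 hx hgh).symm⟩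
end

section
/- Let H and L be Hopf algebras over k, and let λ_H : H → k and λ_L : L → k be partial actions of H and L on k. Then the linear map λ : H ⊗ L → k, λ(h ⊗ l) = λ_H(h)λ_L(l), is a partial action of the tensor product Hopf algebra H ⊗ L on k. -/
open TensorProduct Coalgebra HopfAlgebra

variable (k : Type*) [Field k]

universe u

/-! The comultiplication of `H ⊗ L` acts factorwise, so on pure tensors the right-hand side of
the partial-action identity splits as the product of the identities for `H` and for `L`.
Both sides are biadditive, hence pure tensors suffice. -/

section

variable {H L : Type*} [Ring H] [Ring L] [Bialgebra k H] [Bialgebra k L]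

lemma pconv_eq_sum (l m : H →ₗ[k] k) (h : H) {ι : Type*} (r : Coalgebra.Repr k h ι) :
    pconv k l m h = ∑ i ∈ r.index, l (r.left i) * m (r.right i) := by
  simp only [pconv, LinearMap.comp_apply, ← r.eq, map_sum, map_tmul, LinearEquiv.coe_coe,
    TensorProduct.lid_tmul, smul_eq_mul]

lemma pconv_comp_mulRight_add (l m : H →ₗ[k] k) (x y : H) :
    pconv k l (m ∘ₗ LinearMap.mulRight k (x + y)) =
      pconv k l (m ∘ₗ LinearMap.mulRight k x) + pconv k l (m ∘ₗ LinearMap.mulRight k y) := by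
  have hm : m ∘ₗ LinearMap.mulRight k (x + y) =
      m ∘ₗ LinearMap.mulRight k x + m ∘ₗ LinearMap.mulRight k y :=
    LinearMap.ext fun a => by simp [mul_add]
  simp only [pconv, hm, map_add_right, LinearMap.add_comp, LinearMap.comp_add]

lemma pconv_lid_comp_map_tmul (f₁ f₂ : H →ₗ[k] k) (g₁ g₂ : L →ₗ[k] k) (h : H) (l : L) :
    pconv k ((TensorProduct.lid k k).toLinearMap ∘ₗ map f₁ g₁)
        ((TensorProduct.lid k k).toLinearMap ∘ₗ map f₂ g₂) (h ⊗ₜ l) =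
      pconv k f₁ f₂ h * pconv k g₁ g₂ l := by
  rw [pconv_eq_sum k _ _ _ ((ℛ k h).tmul (ℛ k l)), pconv_eq_sum k _ _ _ (ℛ k h),
    pconv_eq_sum k _ _ _ (ℛ k l), Finset.sum_mul_sum, Coalgebra.Repr.tmul_index,
    Finset.sum_product]
  simp [mul_mul_mul_comm]

lemma lid_comp_map_comp_mulRight_tmul (f : H →ₗ[k] k) (g : L →ₗ[k] k) (a : H) (b : L) :
    ((TensorProduct.lid k k).toLinearMap ∘ₗ map f g) ∘ₗ LinearMap.mulRight k (a ⊗ₜ[k] b) =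
      (TensorProduct.lid k k).toLinearMap ∘ₗ
        map (f ∘ₗ LinearMap.mulRight k a) (g ∘ₗ LinearMap.mulRight k b) := by
  ext x y
  simp

theorem IsPartialAction.tensor {lH : H →ₗ[k] k} {lL : L →ₗ[k] k} (hH : IsPartialAction k lH)
    (hL : IsPartialAction k lL) :
    IsPartialAction k ((TensorProduct.lid k k).toLinearMap ∘ₗ map lH lL) := by
  refine ⟨by simp [Algebra.TensorProduct.one_def, hH.1, hL.1], fun u v => ?_⟩
  induction v using TensorProduct.induction_on with
  | zero => simp [pconv]
  | add x y hx hy => rw [map_add, mul_add, hx, hy, pconv_comp_mulRight_add, LinearMap.add_apply]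
  | tmul a b =>
    induction u using TensorProduct.induction_on with
    | zero => simp [pconv]
    | add x y hx hy => simp only [map_add, add_mul, hx, hy]
    | tmul h l =>
      rw [lid_comp_map_comp_mulRight_tmul, pconv_lid_comp_map_tmul, ← hH.2, ← hL.2]
      simp only [LinearMap.comp_apply, map_tmul, LinearEquiv.coe_coe, TensorProduct.lid_tmul,
        smul_eq_mul]
      ring

end

/-- if `lH` and `lL` are partial actions of `H` and `L` on `k`, then
`h ⊗ l ↦ lH h * lL l` is a partial action of the tensor product Hopf algebra `H ⊗ L`. -/
theorem partialAction_tensor {k H L : Type u} [Field k] [Ring H] [Ring L]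
    [HopfAlgebra k H] [HopfAlgebra k L] (lH : H →ₗ[k] k) (lL : L →ₗ[k] k)
    (h1 : IsPartialAction k lH) (h2 : IsPartialAction k lL) :
    IsPartialAction k ((TensorProduct.lid k k).toLinearMap ∘ₗ TensorProduct.map lH lL) :=
  h1.tensor k h2
end

section
/- Every Hopf algebra H is a λ-Hopf algebra: there exist a Hopf algebra L strictly containing (a copy of) H and a partial action λ : L → k with λ ≠ ε_L such that L_λ ≅ H as Hopf algebras. Concretely, for any nontrivial group G, take L = H ⊗ kG and λ = ε_H ⊗ λ_{{1_G}}; then L_λ = H ⊗ k·1_G ≅ H. -/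
/-!
Write `λ₁ = B.coord 1` for the functional `λ_{1_G}`. Since the basis is group-like,
`λ₁(a₁) a₂ = λ₁(a) • 1` on `kG`, so on `L = H ⊗ kG` the map `u ↦ λ(u₁) u₂` is
`x ⊗ a ↦ λ₁(a) • (x ⊗ 1)`: it is a surjection onto `H` followed by the bialgebra embedding
`x ↦ x ⊗ 1`, whence `L_λ ≅ H`. The same formula reduces the partial-action identity to
`λ((x ⊗ 1) v) = ε(x) λ(v)`, which holds because `ε_H` is multiplicative.
-/

open TensorProduct Coalgebra HopfAlgebra

variable (k : Type*) [Field k]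

universe u

section
variable {k}

def tmulFunctional {M N : Type*} [AddCommMonoid M] [Module k M] [AddCommMonoid N] [Module k N]
    (l₁ : M →ₗ[k] k) (l₂ : N →ₗ[k] k) : M ⊗[k] N →ₗ[k] k :=
  (TensorProduct.lid k k).toLinearMap ∘ₗ map l₁ l₂

@[simp]
theorem tmulFunctional_tmul {M N : Type*} [AddCommMonoid M] [Module k M] [AddCommMonoid N]
    [Module k N] (l₁ : M →ₗ[k] k) (l₂ : N →ₗ[k] k) (x : M) (y : N) :
    tmulFunctional l₁ l₂ (x ⊗ₜ y) = l₁ x * l₂ y := by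
  simp [tmulFunctional]

variable {H A : Type*} [Ring H] [Bialgebra k H] [Ring A] [Bialgebra k A]

theorem pconv_eq_comp_lamL (l m : H →ₗ[k] k) : pconv k l m = m ∘ₗ lamL k l := by
  have : tmulFunctional l m =
      m ∘ₗ (TensorProduct.lid k H).toLinearMap ∘ₗ map l LinearMap.id := by
    ext a b
    simp
  change tmulFunctional l m ∘ₗ comul = m ∘ₗ lamL k l
  rw [this]
  rfl

theorem lamL_counit : lamL k (counit : H →ₗ[k] k) = LinearMap.id := by
  ext x
  exact congrArg (TensorProduct.lid k H) (rTensor_counit_comul x) |>.trans (by simp)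

theorem lamL_apply_of_comul_eq (l : H →ₗ[k] k) {a : H} (ha : comul (R := k) a = a ⊗ₜ a) :
    lamL k l a = l a • a := by
  simp [lamL, ha]

theorem lamL_tmulFunctional (l₁ : H →ₗ[k] k) (l₂ : A →ₗ[k] k) :
    lamL k (tmulFunctional l₁ l₂) = map (lamL k l₁) (lamL k l₂) := by
  have : (TensorProduct.lid k (H ⊗[k] A)).toLinearMap ∘ₗ
      map (tmulFunctional l₁ l₂) LinearMap.id ∘ₗ
        tensorTensorTensorComm k H H A A =
      map ((TensorProduct.lid k H).toLinearMap ∘ₗ map l₁ LinearMap.id)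
        ((TensorProduct.lid k A).toLinearMap ∘ₗ map l₂ LinearMap.id) := by
    ext a b c d
    simp [smul_smul, TensorProduct.smul_tmul', mul_comm]
  simp only [lamL, TensorProduct.comul_def, AlgebraTensorModule.tensorTensorTensorComm_eq,
    AlgebraTensorModule.map_eq]
  simp only [← LinearMap.comp_assoc] at this ⊢
  rw [this, ← map_comp]

theorem isGroupLikeElem_of_comul_eq {C : Type*} [AddCommGroup C] [Module k C] [Coalgebra k C]
    {a : C} (ha0 : a ≠ 0) (ha : comul (R := k) a = a ⊗ₜ a) : IsGroupLikeElem k a := by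
  refine ⟨?_, ha⟩
  have h : counit (R := k) a • a = (1 : k) • a := by
    simpa [ha] using congrArg (TensorProduct.lid k C) (rTensor_counit_comul (R := k) a)
  exact smul_left_injective k ha0 h

theorem Module.Basis.lamL_coord_one {G : Type*} [One G] (B : Module.Basis G k A) (hB1 : B 1 = 1)
    (hBc : ∀ g : G, comul (R := k) (B g) = B g ⊗ₜ[k] B g) (a : A) :
    lamL k (B.coord 1) a = B.coord 1 a • 1 := by
  suffices lamL k (B.coord 1) = (B.coord 1).smulRight 1 from LinearMap.congr_fun this a
  refine B.ext fun g => ?_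
  rw [lamL_apply_of_comul_eq _ (hBc g), LinearMap.smulRight_apply]
  by_cases hg : g = 1
  · rw [hg, hB1]
  · simp [Ne.symm hg]

variable (k H A) in
noncomputable def includeLeftBialgHom : H →ₐc[k] H ⊗[k] A :=
  (Bialgebra.TensorProduct.map (BialgHom.id k H) (Bialgebra.unitBialgHom k A)).comp
    (Bialgebra.TensorProduct.rid k k H).symm.toBialgHom

@[simp]
theorem includeLeftBialgHom_apply (x : H) :
    includeLeftBialgHom k H A x = x ⊗ₜ 1 := by
  simp [includeLeftBialgHom]

theorem includeLeftBialgHom_injective :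
    Function.Injective (includeLeftBialgHom k H A) :=
  Function.LeftInverse.injective (g := TensorProduct.rid k H ∘ LinearMap.lTensor H counit)
    fun x => by simp

variable {φ : A →ₗ[k] k}

theorem tmulFunctional_counit_eq_counit_comp :
    tmulFunctional (counit : H →ₗ[k] k) φ =
      counit ∘ₗ (TensorProduct.rid k H).toLinearMap ∘ₗ LinearMap.lTensor H φ := by
  ext x a
  simp [mul_comm]

theorem tmulFunctional_counit_tmul_one_mul (x : H) (v : H ⊗[k] A) :
    (tmulFunctional counit φ) (x ⊗ₜ 1 * v) =
      counit (R := k) x * (tmulFunctional counit φ) v := by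
  induction v using TensorProduct.induction_on with
  | zero => simp
  | tmul y a => simp [Bialgebra.counit_mul, mul_assoc]
  | add v w hv hw => simp only [mul_add, map_add, hv, hw]

theorem tmulFunctional_counit_ne_counit {a : A} (ha : IsGroupLikeElem k a) (hφa : φ a = 0) :
    tmulFunctional (counit : H →ₗ[k] k) φ ≠ counit := by
  intro h
  simpa [ha.counit_eq_one, hφa] using LinearMap.congr_fun h ((1 : H) ⊗ₜ a)

variable (hφ : ∀ a, lamL k φ a = φ a • 1)
include hφ

theorem lamL_tmulFunctional_counit :
    lamL k (tmulFunctional (counit : H →ₗ[k] k) φ) =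
      (includeLeftBialgHom k H A : H →ₗ[k] H ⊗[k] A) ∘ₗ
        (TensorProduct.rid k H).toLinearMap ∘ₗ LinearMap.lTensor H φ := by
  rw [lamL_tmulFunctional, lamL_counit]
  ext x a
  simp [hφ]

theorem isPartialAction_tmulFunctional_counit (h1 : φ 1 = 1) :
    IsPartialAction k (tmulFunctional (counit : H →ₗ[k] k) φ) := by
  set l := tmulFunctional (counit : H →ₗ[k] k) φ with hl
  refine ⟨by simp [hl, Algebra.TensorProduct.one_def, h1], fun h v => ?_⟩
  set y := (TensorProduct.rid k H) (LinearMap.lTensor H φ h)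
  calc l h * l v = counit (R := k) y * l v := by
        rw [hl, tmulFunctional_counit_eq_counit_comp]; rfl
    _ = l (y ⊗ₜ 1 * v) := (tmulFunctional_counit_tmul_one_mul y v).symm
    _ = pconv k l (l ∘ₗ LinearMap.mulRight k v) h := by
      rw [pconv_eq_comp_lamL, lamL_tmulFunctional_counit hφ]
      simp only [LinearMap.comp_apply, BialgHom.coe_toLinearMap, includeLeftBialgHom_apply]
      rfl

theorem range_lamL_tmulFunctional_counit (h1 : φ 1 = 1) :
    LinearMap.range (lamL k (tmulFunctional (counit : H →ₗ[k] k) φ)) =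
      LinearMap.range (includeLeftBialgHom k H A : H →ₗ[k] H ⊗[k] A) := by
  rw [lamL_tmulFunctional_counit hφ, LinearMap.range_comp_of_range_eq_top]
  exact LinearMap.range_eq_top.2 fun x => ⟨x ⊗ₜ 1, by simp [h1]⟩

end

open scoped Classical in
theorem every_hopfAlgebra_is_lambdaHopf_general {k H G A : Type u} [Field k] [Ring H]
    [HopfAlgebra k H] [Group G] [Nontrivial G] [Ring A] [HopfAlgebra k A]
    (B : Module.Basis G k A) (hB1 : B 1 = 1)
    (hBc : ∀ g : G, comul (R := k) (B g) = B g ⊗ₜ[k] B g) :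
    ∀ l : H ⊗[k] A →ₗ[k] k,
      l = (TensorProduct.lid k k).toLinearMap ∘ₗ
        TensorProduct.map (counit (R := k))
          (B.constr k fun g => if g = (1 : G) then (1 : k) else 0) →
      IsPartialAction k l ∧ l ≠ counit (R := k) ∧
      ∃ f : H →ₗ[k] H ⊗[k] A,
        Function.Injective f ∧ f 1 = 1 ∧ (∀ a b : H, f (a * b) = f a * f b) ∧
        (∀ a : H, comul (R := k) (f a) = TensorProduct.map f f (comul (R := k) a)) ∧
        (∀ a : H, counit (R := k) (f a) = counit (R := k) a) ∧
        LinearMap.range f = LinearMap.range (lamL k l) := by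
  have hδ : (B.constr k fun g => if g = (1 : G) then (1 : k) else 0) = B.coord 1 :=
    B.ext fun g => by simp [Finsupp.single_apply]
  have h1 : B.coord 1 1 = 1 := by simp [← hB1]
  have hφ := B.lamL_coord_one hB1 hBc
  obtain ⟨g, hg⟩ := exists_ne (1 : G)
  rintro l rfl
  rw [hδ]
  refine ⟨isPartialAction_tmulFunctional_counit hφ h1,
    tmulFunctional_counit_ne_counit (isGroupLikeElem_of_comul_eq (B.ne_zero g) (hBc g))
      (by simp [hg]),
    includeLeftBialgHom k H A, ?_⟩
  simp only [BialgHom.coe_toLinearMap]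
  exact ⟨includeLeftBialgHom_injective, map_one _, map_mul _,
    fun a => (CoalgHomClass.map_comp_comul_apply _ a).symm, CoalgHomClass.counit_comp_apply _,
    (range_lamL_tmulFunctional_counit hφ h1).symm⟩

open scoped Classical in
/-- every Hopf algebra `H` is a λ-Hopf algebra. Concretely, for any
nontrivial group `G` with group Hopf algebra `A = kG` (presented via a group-like basis
`B`), the functional `λ = ε_H ⊗ λ_{1}` on `L = H ⊗ kG` is a partial action distinct from
the counit, and `L_λ`, the range of `lamL`, is the image of the injective Hopf-algebra
embedding `h ↦ h ⊗ 1` of `H` into `L`; hence `L_λ ≅ H` as Hopf algebras. -/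
theorem every_hopfAlgebra_is_lambdaHopf {k H G A : Type u} [Field k] [Ring H]
    [HopfAlgebra k H] [Group G] [Nontrivial G] [Ring A] [HopfAlgebra k A]
    (B : Module.Basis G k A) (hB1 : B 1 = 1) (hBmul : ∀ g h : G, B (g * h) = B g * B h)
    (hBc : ∀ g : G, comul (R := k) (B g) = B g ⊗ₜ[k] B g) :
    ∀ l : H ⊗[k] A →ₗ[k] k,
      l = (TensorProduct.lid k k).toLinearMap ∘ₗ
        TensorProduct.map (counit (R := k))
          (B.constr k fun g => if g = (1 : G) then (1 : k) else 0) →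
      IsPartialAction k l ∧ l ≠ counit (R := k) ∧
      ∃ f : H →ₗ[k] H ⊗[k] A,
        Function.Injective f ∧ f 1 = 1 ∧ (∀ a b : H, f (a * b) = f a * f b) ∧
        (∀ a : H, comul (R := k) (f a) = TensorProduct.map f f (comul (R := k) a)) ∧
        (∀ a : H, counit (R := k) (f a) = counit (R := k) a) ∧
        LinearMap.range f = LinearMap.range (lamL k l) :=
  every_hopfAlgebra_is_lambdaHopf_general B hB1 hBc
end
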